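/- arXiv:2001.04458 — 5 statements merged into one kernel-verified Lean document; each statement's English description precedes it below -/
import Mathlib

section
/- Define a family of piecewise linear functions f_i : [0,1] → ℝ inductively by f_0(t) = 0, g_0(t) = 1 - t, and for i ≥ 0, f_{i+1}(t) = min(f_i(t) + 2^{-(i+1)}, g_i(t)) and g_{i+1}(t) = max(f_i(t) + 2^{-(i+1)}, g_i(t)). Then for every i ≥ 0, f_i and g_i each consist of exactly 2^i linear segments, each of time-duration 2^{-i}, with slopes alternating between 0 and -1; moreover f_i begins with a slope-0 segment starting at value 1 - 2^{-i} and g_i begins with a slope-(-1) segment starting at value 1. -/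
noncomputable def fg : ℕ → (ℝ → ℝ) × (ℝ → ℝ)
  | 0 => (fun _ => 0, fun t => 1 - t)
  | (i+1) => (fun t => min ((fg i).1 t + ((2:ℝ)⁻¹)^(i+1)) ((fg i).2 t),
              fun t => max ((fg i).1 t + ((2:ℝ)⁻¹)^(i+1)) ((fg i).2 t))

lemma fg_key : ∀ i : ℕ, ∀ j : ℕ, j < 2^i → ∀ t : ℝ,
    (j:ℝ)*((2:ℝ)⁻¹)^i ≤ t → t ≤ ((j:ℝ)+1)*((2:ℝ)⁻¹)^i →
    (fg i).1 t = (if Even j then 1 - ((j:ℝ)+2)/2*((2:ℝ)⁻¹)^i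
        else 1 - ((j:ℝ)+1)/2*((2:ℝ)⁻¹)^i - (t - (j:ℝ)*((2:ℝ)⁻¹)^i)) ∧
    (fg i).2 t = (if Even j then 1 - (j:ℝ)/2*((2:ℝ)⁻¹)^i - (t - (j:ℝ)*((2:ℝ)⁻¹)^i)
        else 1 - ((j:ℝ)+1)/2*((2:ℝ)⁻¹)^i) := by
  intro i
  induction i with
  | zero =>
    intro j hj t ht1 ht2
    interval_cases j
    simp [fg]
  | succ i ih =>
    intro j' hj' t ht1 ht2
    have hpow : ((2:ℝ)⁻¹)^(i+1) = ((2:ℝ)⁻¹)^i / 2 := by rw [pow_succ]; ring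
    have hpos : (0:ℝ) < ((2:ℝ)⁻¹)^i := by positivity
    have h2 : (2:ℕ)^(i+1) = 2 * 2^i := by rw [pow_succ]; ring
    rcases Nat.even_or_odd j' with ⟨j, hj⟩ | ⟨j, hj⟩
    · -- j' = 2j
      subst hj
      have hjlt : j < 2^i := by omega
      rw [hpow] at ht1 ht2
      push_cast at ht1 ht2 ⊢
      have h1 : (j:ℝ)*((2:ℝ)⁻¹)^i ≤ t := by linarith
      have h2' : t ≤ ((j:ℝ)+1)*((2:ℝ)⁻¹)^i := by linarith
      obtain ⟨hf, hg⟩ := ih j hjlt t h1 h2'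
      have heven : Even (j + j) := ⟨j, rfl⟩
      simp only [fg, if_pos heven, hpow]
      push_cast
      by_cases hje : Even j
      · rw [if_pos hje] at hf hg
        constructor
        · rw [hf, hg, min_eq_left (by linarith)]; ring
        · rw [hf, hg, max_eq_right (by linarith)]; ring
      · rw [if_neg hje] at hf hg
        constructor
        · rw [hf, hg, min_eq_right (by linarith)]; ring
        · rw [hf, hg, max_eq_left (by linarith)]; ring
    · -- j' = 2j+1
      subst hj
      have hjlt : j < 2^i := by omega
      rw [hpow] at ht1 ht2
      push_cast at ht1 ht2 ⊢
      have h1 : (j:ℝ)*((2:ℝ)⁻¹)^i ≤ t := by linarith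
      have h2' : t ≤ ((j:ℝ)+1)*((2:ℝ)⁻¹)^i := by linarith
      obtain ⟨hf, hg⟩ := ih j hjlt t h1 h2'
      have hodd : ¬ Even (2*j + 1) := by simp [parity_simps]
      simp only [fg, if_neg hodd, hpow]
      push_cast
      by_cases hje : Even j
      · rw [if_pos hje] at hf hg
        constructor
        · rw [hf, hg, min_eq_right (by linarith)]; ring
        · rw [hf, hg, max_eq_left (by linarith)]; ring
      · rw [if_neg hje] at hf hg
        constructor
        · rw [hf, hg, min_eq_left (by linarith)]; ring
        · rw [hf, hg, max_eq_right (by linarith)]; ring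

theorem stmt0 (i : ℕ) :
    (fg i).1 0 = 1 - ((2:ℝ)⁻¹)^i ∧ (fg i).2 0 = 1 ∧
    ∀ j : ℕ, j < 2^i →
      (∀ t ∈ Set.Icc ((j:ℝ) * ((2:ℝ)⁻¹)^i) (((j:ℝ)+1) * ((2:ℝ)⁻¹)^i),
        (fg i).1 t = (fg i).1 ((j:ℝ) * ((2:ℝ)⁻¹)^i)
          + (if Even j then 0 else -1) * (t - (j:ℝ) * ((2:ℝ)⁻¹)^i)) ∧
      (∀ t ∈ Set.Icc ((j:ℝ) * ((2:ℝ)⁻¹)^i) (((j:ℝ)+1) * ((2:ℝ)⁻¹)^i),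
        (fg i).2 t = (fg i).2 ((j:ℝ) * ((2:ℝ)⁻¹)^i)
          + (if Even j then -1 else 0) * (t - (j:ℝ) * ((2:ℝ)⁻¹)^i)) := by
  have hpos : (0:ℝ) < ((2:ℝ)⁻¹)^i := by positivity
  obtain ⟨hf0, hg0⟩ := fg_key i 0 (by positivity) 0 (by norm_num)
    (by positivity)
  refine ⟨?_, ?_, ?_⟩
  · rw [hf0]; norm_num
  · rw [hg0]; norm_num
  · intro j hj
    obtain ⟨hfe, hge⟩ := fg_key i j hj ((j:ℝ)*((2:ℝ)⁻¹)^i) le_rfl (by nlinarith)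
    constructor <;> (intro t ht; obtain ⟨ht1, ht2⟩ := ht)
    · obtain ⟨hft, _⟩ := fg_key i j hj t ht1 ht2
      rw [hft, hfe]; by_cases hje : Even j <;> simp [hje] <;> try ring
    · obtain ⟨_, hgt⟩ := fg_key i j hj t ht1 ht2
      rw [hgt, hge]; by_cases hje : Even j <;> simp [hje] <;> try ring
end

section
/- There exists a family of piecewise linear continuous functions h_n : [0,1] → ℝ, each defined by at most polynomially many arithmetic operations from previous members (specifically h_n = min/max combinations as in the recursion f_{i+1} = min(f_i + 2^{-(i+1)}, g_i), g_{i+1} = max(f_i + 2^{-(i+1)}, g_i) starting from f_0 = 0, g_0 = 1 - t), such that h_n = f_n has at least 2^n - 1 breakpoints, i.e., points in (0,1) where the slope of h_n changes. -/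
/-- `h` is affine on some open neighborhood of `t`. -/
def AffineOnNhd (h : ℝ → ℝ) (t : ℝ) : Prop :=
  ∃ ε > (0:ℝ), ∃ a b : ℝ, ∀ s ∈ Set.Ioo (t - ε) (t + ε), h s = a * s + b

/-- `t` is a breakpoint of `h` : a point of `(0,1)` where `h` is not locally affine. -/
def IsBreakpoint (h : ℝ → ℝ) (t : ℝ) : Prop :=
  t ∈ Set.Ioo (0:ℝ) 1 ∧ ¬ AffineOnNhd h t

/-! On each dyadic interval `[j / 2ⁿ, (j + 1) / 2ⁿ]`, `f_{n+1}` is constant on the left half and has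
slope `-1` on the right half, while `g_{n+1}` does the opposite; this explicit form propagates
through the recursion by halving each interval. Hence `f_{n+1}` has a kink at every
`k / 2ⁿ⁺¹` with `0 < k < 2ⁿ⁺¹`: its second difference there is `±δ` rather than `0`. -/

theorem fg_succ_apply_of_eq_or_swap (n : ℕ) (t x y : ℝ)
    (h : ((fg n).1 t + (2⁻¹ : ℝ) ^ (n + 1) = 1 - x / 2 ^ (n + 1) ∧ (fg n).2 t = 1 - y / 2 ^ (n + 1)) ∨
      ((fg n).1 t + (2⁻¹ : ℝ) ^ (n + 1) = 1 - y / 2 ^ (n + 1) ∧ (fg n).2 t = 1 - x / 2 ^ (n + 1))) :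
    (fg (n + 1)).1 t = 1 - max x y / 2 ^ (n + 1) ∧ (fg (n + 1)).2 t = 1 - min x y / 2 ^ (n + 1) := by
  have hpos : (0 : ℝ) ≤ 2 ^ (n + 1) := by positivity
  simp only [fg]
  rw [← max_div_div_right hpos, ← min_div_div_right hpos, ← min_sub_sub_left, ← max_sub_sub_left]
  rcases h with ⟨hf, hg⟩ | ⟨hf, hg⟩
  · exact ⟨by rw [hf, hg], by rw [hf, hg]⟩
  · exact ⟨by rw [hf, hg, min_comm], by rw [hf, hg, max_comm]⟩

theorem fg_succ_apply (n j : ℕ) (hj : j < 2 ^ n) {s : ℝ} (hs₀ : 0 ≤ s) (hs₁ : s ≤ 1) :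
    (fg (n + 1)).1 ((j + s) / 2 ^ n) = 1 - (j + max 1 (2 * s)) / 2 ^ (n + 1) ∧
      (fg (n + 1)).2 ((j + s) / 2 ^ n) = 1 - (j + min 1 (2 * s)) / 2 ^ (n + 1) := by
  rw [← max_add_add_left, ← min_add_add_left]
  induction n generalizing j s with
  | zero =>
    obtain rfl : j = 0 := by omega
    exact fg_succ_apply_of_eq_or_swap 0 _ _ _ (Or.inl ⟨by norm_num [fg], by norm_num [fg]⟩)
  | succ n ih =>
    -- the dyadic interval of `j = 2 * r + b` is the left (`b = 0`) or right (`b = 1`) half of that of `r`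
    obtain ⟨r, rfl | rfl⟩ := Nat.even_or_odd' j
    · have hpt : ((2 * r : ℕ) + s) / 2 ^ (n + 1) = (r + s / 2) / 2 ^ n := by
        push_cast; field_simp; ring
      obtain ⟨hf, hg⟩ := ih r (by omega) (s := s / 2) (by positivity) (by linarith)
      rw [max_eq_left (by linarith)] at hf
      rw [min_eq_right (by linarith)] at hg
      refine hpt ▸ fg_succ_apply_of_eq_or_swap (n + 1) _ _ _ (Or.inl ⟨?_, ?_⟩)
      · rw [hf, inv_pow]; push_cast; field_simp; ring
      · rw [hg]; push_cast; field_simp; ring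
    · have hpt : ((2 * r + 1 : ℕ) + s) / 2 ^ (n + 1) = (r + (1 + s) / 2) / 2 ^ n := by
        push_cast; field_simp; ring
      obtain ⟨hf, hg⟩ := ih r (by omega) (s := (1 + s) / 2) (by positivity) (by linarith)
      rw [max_eq_right (by linarith)] at hf
      rw [min_eq_left (by linarith)] at hg
      refine hpt ▸ fg_succ_apply_of_eq_or_swap (n + 1) _ _ _ (Or.inr ⟨?_, ?_⟩)
      · rw [hf, inv_pow]; push_cast; field_simp; ring
      · rw [hg]; push_cast; field_simp; ring

theorem not_affineOnNhd_of_second_difference_ne {h : ℝ → ℝ} {t c : ℝ} (hc : 0 < c)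
    (hne : ∀ δ, 0 < δ → δ ≤ c → h (t - δ) + h (t + δ) ≠ 2 * h t) : ¬ AffineOnNhd h t := by
  rintro ⟨ε, hε, a, b, hab⟩
  obtain ⟨δ, hδ, hδε, hδc⟩ : ∃ δ, 0 < δ ∧ δ < ε ∧ δ ≤ c :=
    ⟨min (ε / 2) c, lt_min (by positivity) hc, by linarith [min_le_left (ε / 2) c], min_le_right _ _⟩
  apply hne δ hδ hδc
  rw [hab (t - δ) ⟨by linarith, by linarith⟩, hab (t + δ) ⟨by linarith, by linarith⟩,
    hab t ⟨by linarith, by linarith⟩]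
  ring

theorem fg_succ_second_difference_ne (n k : ℕ) (hk₀ : 0 < k) (hk : k < 2 ^ (n + 1)) {δ : ℝ}
    (hδ₀ : 0 < δ) (hδ : δ ≤ 1 / 2 ^ (n + 1)) :
    (fg (n + 1)).1 (k / 2 ^ (n + 1) - δ) + (fg (n + 1)).1 (k / 2 ^ (n + 1) + δ) ≠
      2 * (fg (n + 1)).1 (k / 2 ^ (n + 1)) := by
  have f_apply (j : ℕ) (s : ℝ) (hj : j < 2 ^ n) (hs₀ : 0 ≤ s) (hs₁ : s ≤ 1) :=
    (fg_succ_apply n j hj hs₀ hs₁).1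
  set d := 2 ^ n * δ
  have hd₀ : 0 < d := by positivity
  have hd : d ≤ 1 / 2 := by
    rw [le_div_iff₀ (by positivity), pow_succ] at hδ
    linarith
  obtain ⟨r, rfl | rfl⟩ := Nat.even_or_odd' k
  · obtain ⟨q, rfl⟩ : ∃ q, r = q + 1 := ⟨r - 1, by omega⟩
    have hq : q + 1 < 2 ^ n := by rw [pow_succ] at hk; omega
    rw [show (2 * (q + 1) : ℕ) / (2 : ℝ) ^ (n + 1) - δ = (q + (1 - d)) / 2 ^ n by
        push_cast; field_simp; ring,
      show (2 * (q + 1) : ℕ) / (2 : ℝ) ^ (n + 1) + δ = ((q + 1 : ℕ) + d) / 2 ^ n by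
        push_cast; field_simp; ring,
      show (2 * (q + 1) : ℕ) / (2 : ℝ) ^ (n + 1) = ((q + 1 : ℕ) + 0) / 2 ^ n by
        push_cast; field_simp; ring,
      f_apply _ _ (by omega) (by linarith) (by linarith), f_apply _ _ hq le_rfl zero_le_one,
      f_apply _ _ hq hd₀.le (by linarith), max_eq_right (by linarith), max_eq_left (by linarith),
      max_eq_left (by linarith)]
    push_cast
    intro h
    field_simp at h
    linarith
  · have hr : r < 2 ^ n := by rw [pow_succ] at hk; omega
    rw [show (2 * r + 1 : ℕ) / (2 : ℝ) ^ (n + 1) - δ = (r + (1 / 2 - d)) / 2 ^ n by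
        push_cast; field_simp; ring,
      show (2 * r + 1 : ℕ) / (2 : ℝ) ^ (n + 1) + δ = (r + (1 / 2 + d)) / 2 ^ n by
        push_cast; field_simp; ring,
      show (2 * r + 1 : ℕ) / (2 : ℝ) ^ (n + 1) = (r + 1 / 2) / 2 ^ n by
        push_cast; field_simp; ring,
      f_apply _ _ hr (by linarith) (by linarith), f_apply _ _ hr (by linarith) (by linarith),
      f_apply _ _ hr (by norm_num) (by norm_num), max_eq_left (by linarith),
      max_eq_right (by linarith), max_eq_left (by norm_num)]
    intro h
    field_simp at h
    linarith

theorem isBreakpoint_fg_succ (n k : ℕ) (hk₀ : 0 < k) (hk : k < 2 ^ (n + 1)) :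
    IsBreakpoint (fg (n + 1)).1 (k / 2 ^ (n + 1)) :=
  ⟨⟨by positivity, by rw [div_lt_one (by positivity)]; exact_mod_cast hk⟩,
    not_affineOnNhd_of_second_difference_ne (c := 1 / 2 ^ (n + 1)) (by positivity)
      fun _ hδ₀ hδ => fg_succ_second_difference_ne n k hk₀ hk hδ₀ hδ⟩

theorem stmt3 :
    ∃ h : ℕ → ℝ → ℝ, (∀ n, h n = (fg n).1) ∧
      ∀ n, ∃ B : Finset ℝ,
        (∀ t ∈ B, IsBreakpoint (h n) t) ∧ 2^n - 1 ≤ B.card := by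
  refine ⟨fun n => (fg n).1, fun n => rfl, fun n =>
    ⟨(Finset.Ioo 0 (2 ^ n)).image fun k : ℕ => (k : ℝ) / 2 ^ n, ?_, ?_⟩⟩
  · simp only [Finset.forall_mem_image, Finset.mem_Ioo]
    rintro k ⟨hk₀, hk⟩
    cases n with
    | zero => omega
    | succ n => exact isBreakpoint_fg_succ n k hk₀ hk
  · have hinj : Function.Injective fun k : ℕ => (k : ℝ) / 2 ^ n := fun _ _ hab =>
      Nat.cast_injective ((div_left_inj' (by positivity)).mp hab)
    rw [Finset.card_image_of_injective _ hinj, Nat.card_Ioo, Nat.sub_zero]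
end

section
/- Let r₁ ≠ r₂ be integers and let (x₁, y₁), (x₂, y₂) be rational points whose coordinates are all d-expressible for a positive integer d. Consider the two lines L₁, L₂ where Lᵢ passes through (xᵢ, yᵢ) with slope -rᵢ. If L₁ and L₂ intersect at a point (x, y), then x and y are (d·|r₁ - r₂|)-expressible. -/
/-- A rational `x` is `c`-expressible if its denominator (in lowest terms) divides `c`. -/
def Expressible (c : ℕ) (x : ℚ) : Prop := x.den ∣ c

lemma expressible_iff (c : ℕ) (hc : c ≠ 0) (x : ℚ) :
    Expressible c x ↔ ∃ n : ℤ, (c : ℚ) * x = n := by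
  constructor
  · rintro ⟨k, hk⟩
    refine ⟨x.num * k, ?_⟩
    have hden : (x.den : ℚ) ≠ 0 := by exact_mod_cast x.den_ne_zero
    have h1 : x * (x.den : ℚ) = x.num := by
      nth_rewrite 1 [← Rat.num_div_den x]
      exact div_mul_cancel₀ _ hden
    calc (c : ℚ) * x = (k : ℚ) * (x * x.den) := by push_cast [hk]; ring
      _ = ((x.num * k : ℤ) : ℚ) := by rw [h1]; push_cast; ring
  · rintro ⟨n, hn⟩
    have hcz : (c : ℚ) ≠ 0 := by exact_mod_cast hc
    have hx : x = (n : ℚ) / (c : ℚ) := by rw [eq_div_iff hcz, mul_comm]; exact hn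
    have hx' : x = Rat.divInt n c := by rw [hx, Rat.divInt_eq_div]; norm_cast
    have hdvd : (x.den : ℤ) ∣ (c : ℤ) := by rw [hx']; exact Rat.den_dvd n c
    exact_mod_cast hdvd

theorem stmt6 (d : ℕ) (hd : 0 < d) (r₁ r₂ : ℤ) (hr : r₁ ≠ r₂)
    (x₁ y₁ x₂ y₂ x y : ℚ)
    (hx₁ : Expressible d x₁) (hy₁ : Expressible d y₁)
    (hx₂ : Expressible d x₂) (hy₂ : Expressible d y₂)
    (hL1 : y - y₁ = -(r₁:ℚ) * (x - x₁))
    (hL2 : y - y₂ = -(r₂:ℚ) * (x - x₂)) :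
    Expressible (d * (r₁ - r₂).natAbs) x ∧ Expressible (d * (r₁ - r₂).natAbs) y := by
  have hdne : d ≠ 0 := hd.ne'
  have hrne : (r₁ - r₂).natAbs ≠ 0 := by
    simpa [Int.natAbs_eq_zero, sub_eq_zero] using hr
  have hN : d * (r₁ - r₂).natAbs ≠ 0 := Nat.mul_ne_zero hdne hrne
  obtain ⟨a₁, ha₁⟩ := (expressible_iff d hdne x₁).1 hx₁
  obtain ⟨b₁, hb₁⟩ := (expressible_iff d hdne y₁).1 hy₁
  obtain ⟨a₂, ha₂⟩ := (expressible_iff d hdne x₂).1 hx₂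
  obtain ⟨b₂, hb₂⟩ := (expressible_iff d hdne y₂).1 hy₂
  have keyx : ((r₁ - r₂ : ℤ) : ℚ) * ((d : ℚ) * x) = (b₁ - b₂ + r₁ * a₁ - r₂ * a₂ : ℤ) := by
    push_cast
    linear_combination (d : ℚ) * hL1 - (d : ℚ) * hL2 + hb₁ - hb₂
      + (r₁ : ℚ) * ha₁ - (r₂ : ℚ) * ha₂
  have keyy : ((r₁ - r₂ : ℤ) : ℚ) * ((d : ℚ) * y) = (r₁ * b₂ - r₂ * b₁ + r₁ * r₂ * (a₂ - a₁) : ℤ) := by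
    push_cast
    linear_combination -(d : ℚ) * (r₂ : ℚ) * hL1 + (d : ℚ) * (r₁ : ℚ) * hL2
      - (r₂ : ℚ) * hb₁ + (r₁ : ℚ) * hb₂ - (r₁ : ℚ) * (r₂ : ℚ) * ha₁ + (r₁ : ℚ) * (r₂ : ℚ) * ha₂
  have habs : ∀ z : ℚ, ∀ m : ℤ, ((r₁ - r₂ : ℤ) : ℚ) * ((d : ℚ) * z) = m →
      ∃ n : ℤ, ((d * (r₁ - r₂).natAbs : ℕ) : ℚ) * z = n := by
    intro z m hm
    rcases Int.natAbs_eq (r₁ - r₂) with h | h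
    · refine ⟨m, ?_⟩
      have hc := congrArg (fun n : ℤ => (n : ℚ)) h.symm
      have hq : ((r₁ - r₂).natAbs : ℚ) = ((r₁ - r₂ : ℤ) : ℚ) := (Int.cast_natCast _).symm.trans hc
      rw [Nat.cast_mul, hq]
      linear_combination hm
    · refine ⟨-m, ?_⟩
      have h2 : ((r₁ - r₂).natAbs : ℤ) = -(r₁ - r₂) := by omega
      have hc := congrArg (fun n : ℤ => (n : ℚ)) h2
      simp only [Int.cast_neg] at hc
      have hq : ((r₁ - r₂).natAbs : ℚ) = -((r₁ - r₂ : ℤ) : ℚ) := (Int.cast_natCast _).symm.trans hc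
      rw [Nat.cast_mul, hq]
      push_cast at hm ⊢
      linear_combination -hm
  exact ⟨(expressible_iff _ hN x).2 (habs x _ keyx), (expressible_iff _ hN y).2 (habs y _ keyy)⟩
end

section
/- Let f : [0,1] → ℝ be a piecewise linear function covered by a set of k lines, and let r ≥ 0 and c ≥ 0 be reals. Then the function g(t) = min over t' ∈ [t,1] of (r·(t' - t) + f(t') + c) is piecewise linear and covered by a set of at most k + 1 lines (the k shifted lines plus lines of slope -r). -/
/-!
With `F u = f u + r * u`, the waiting value is `x ↦ (min of F over [x, 1]) - r * x + c`, so it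
suffices to see that the suffix minimum of a function covered by `k` lines is again covered by
`k` lines. On the `j`-th piece the suffix minimum is `min (F x) A`, where `A` is the least value
of `F` at the nodes to the right of the piece; so the piece splits into a part on its own line,
used only if that line has nonnegative slope, and a part on the horizontal line at height `A`.
When the horizontal part is used, `A` is attained at the right end of a piece whose line `ℓ` has
negative slope, and as `F` decreases along `ℓ`, `A` is the least value of `F` at all right ends
of pieces on `ℓ`. Replacing each line of negative slope by the horizontal line at that height
therefore yields `k` lines covering the suffix minimum.
-/

/-- `f` is, on `[0,1]`, a piecewise linear function each of whose (maximal) affine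
pieces is contained in one of `k` lines. -/
def CoveredByLines (f : ℝ → ℝ) (k : ℕ) : Prop :=
  ∃ (m : ℕ) (t : Fin (m+1) → ℝ) (L : Fin k → ℝ × ℝ) (l : Fin m → Fin k),
    Monotone t ∧ t 0 = 0 ∧ t (Fin.last m) = 1 ∧
    ∀ j : Fin m, ∀ s ∈ Set.Icc (t j.castSucc) (t j.succ),
      f s = (L (l j)).1 * s + (L (l j)).2

open Set

theorem min_le_affine_of_mem_Icc {p q a b x : ℝ} (hx : x ∈ Icc a b) :
    min (p * a + q) (p * b + q) ≤ p * x + q := by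
  rcases le_total 0 p with hp | hp
  · exact min_le_of_left_le (by nlinarith [hx.1])
  · exact min_le_of_right_le (by nlinarith [hx.2])

theorem neg_of_affine_lt {p q a b : ℝ} (hab : a ≤ b) (h : p * b + q < p * a + q) : p < 0 := by
  by_contra hp
  nlinarith

theorem exists_affine_eq_of_mem_Icc {p q a b y : ℝ} (hab : a ≤ b)
    (hy : y ∈ Icc (p * a + q) (p * b + q)) : ∃ τ ∈ Icc a b, p * τ + q = y :=
  intermediate_value_Icc hab (f := fun x => p * x + q) (by fun_prop) hy

theorem CoveredByLines.mono {f : ℝ → ℝ} {k k' : ℕ} (hf : CoveredByLines f k) (hk : k ≤ k') :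
    CoveredByLines f k' := by
  obtain ⟨m, t, L, l, hmono, h0, h1, hcov⟩ := hf
  refine ⟨m, t, Function.extend (Fin.castLE hk) L 0, Fin.castLE hk ∘ l, hmono, h0, h1, ?_⟩
  simpa only [Function.comp_apply, (Fin.castLE_injective hk).extend_apply] using hcov

structure IsLineCover {k m : ℕ} (f : ℝ → ℝ) (t : Fin (m + 1) → ℝ) (L : Fin k → ℝ × ℝ)
    (l : Fin m → Fin k) : Prop where
  monotone : Monotone t
  apply_zero : t 0 = 0
  apply_last : t (Fin.last m) = 1
  eq_on_piece : ∀ j : Fin m, ∀ s ∈ Icc (t j.castSucc) (t j.succ),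
    f s = (L (l j)).1 * s + (L (l j)).2

theorem coveredByLines_iff {f : ℝ → ℝ} {k : ℕ} :
    CoveredByLines f k ↔ ∃ (m : ℕ) (t : Fin (m + 1) → ℝ) (L : Fin k → ℝ × ℝ) (l : Fin m → Fin k),
      IsLineCover f t L l :=
  ⟨fun ⟨m, t, L, l, h₁, h₂, h₃, h₄⟩ => ⟨m, t, L, l, ⟨h₁, h₂, h₃, h₄⟩⟩,
    fun ⟨m, t, L, l, h⟩ => ⟨m, t, L, l, h.1, h.2, h.3, h.4⟩⟩

namespace IsLineCover

variable {k m : ℕ} {f : ℝ → ℝ} {t : Fin (m + 1) → ℝ} {L : Fin k → ℝ × ℝ} {l : Fin m → Fin k}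

theorem castSucc_le_succ (h : IsLineCover f t L l) (j : Fin m) : t j.castSucc ≤ t j.succ :=
  h.monotone j.castSucc_le_succ

theorem piece_subset_Icc (h : IsLineCover f t L l) (j : Fin m) :
    Icc (t j.castSucc) (t j.succ) ⊆ Icc 0 1 :=
  Icc_subset_Icc (h.apply_zero ▸ h.monotone (Fin.zero_le _))
    (h.apply_last ▸ h.monotone (Fin.le_last _))

theorem exists_mem_piece (h : IsLineCover f t L l) {x : ℝ} (hx : x ∈ Icc 0 1) :
    ∃ j : Fin m, x ∈ Icc (t j.castSucc) (t j.succ) := by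
  have key : ∀ p : Fin (m + 1), p ≠ 0 → x ≤ t p →
      ∃ j : Fin m, x ∈ Icc (t j.castSucc) (t j.succ) := by
    intro p
    induction p using Fin.induction with
    | zero => exact fun h0 => (h0 rfl).elim
    | succ i ih =>
      intro _ hxi
      by_cases hi : t i.castSucc ≤ x
      · exact ⟨i, hi, hxi⟩
      · refine ih (fun h0 => hi ?_) (le_of_not_ge hi)
        rw [h0, h.apply_zero]
        exact hx.1
  refine key (Fin.last m) (fun h0 => zero_ne_one (α := ℝ) ?_) (h.apply_last ▸ hx.2)
  rw [← h.apply_zero, ← h.apply_last, h0]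

theorem congr (h : IsLineCover f t L l) {g : ℝ → ℝ} (hfg : EqOn f g (Icc 0 1)) :
    IsLineCover g t L l :=
  { h with
    eq_on_piece := fun j s hs => (hfg (h.piece_subset_Icc j hs)).symm.trans (h.eq_on_piece j s hs) }

theorem add_affine (h : IsLineCover f t L l) (a b : ℝ) :
    IsLineCover (fun x => f x + a * x + b) t (fun i => ((L i).1 + a, (L i).2 + b)) l :=
  { h with
    eq_on_piece := fun j s hs => by rw [h.eq_on_piece j s hs]; ring }

theorem min_le_of_mem_piece (h : IsLineCover f t L l) (j : Fin m) {a b x : ℝ}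
    (ha : t j.castSucc ≤ a) (hb : b ≤ t j.succ) (hx : x ∈ Icc a b) :
    min (f a) (f b) ≤ f x := by
  have hab : a ≤ b := hx.1.trans hx.2
  rw [h.eq_on_piece j a ⟨ha, hab.trans hb⟩, h.eq_on_piece j b ⟨ha.trans hab, hb⟩,
    h.eq_on_piece j x ⟨ha.trans hx.1, hx.2.trans hb⟩]
  exact min_le_affine_of_mem_Icc hx

end IsLineCover

theorem CoveredByLines.congr {f g : ℝ → ℝ} {k : ℕ} (hf : CoveredByLines f k)
    (hfg : EqOn f g (Icc 0 1)) : CoveredByLines g k := by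
  obtain ⟨m, t, L, l, h⟩ := coveredByLines_iff.1 hf
  exact coveredByLines_iff.2 ⟨m, t, L, l, h.congr hfg⟩

theorem CoveredByLines.add_affine {f : ℝ → ℝ} {k : ℕ} (hf : CoveredByLines f k) (a b : ℝ) :
    CoveredByLines (fun x => f x + a * x + b) k := by
  obtain ⟨m, t, L, l, h⟩ := coveredByLines_iff.1 hf
  exact coveredByLines_iff.2 ⟨m, t, _, l, h.add_affine a b⟩

def TwoPiecesOn {k : ℕ} (g : ℝ → ℝ) (L : Fin k → ℝ × ℝ) (a b : ℝ) : Prop :=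
  ∃ τ ∈ Icc a b, ∃ i₁ i₂ : Fin k,
    (∀ x ∈ Icc a τ, g x = (L i₁).1 * x + (L i₁).2) ∧ ∀ x ∈ Icc τ b, g x = (L i₂).1 * x + (L i₂).2

theorem TwoPiecesOn.of_eqOn {k : ℕ} {g : ℝ → ℝ} {L : Fin k → ℝ × ℝ} {a b : ℝ} (hab : a ≤ b)
    (i : Fin k) (hg : ∀ x ∈ Icc a b, g x = (L i).1 * x + (L i).2) : TwoPiecesOn g L a b :=
  ⟨b, ⟨hab, le_rfl⟩, i, i, hg, fun x hx => hg x ⟨hab.trans hx.1, hx.2⟩⟩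

theorem coveredByLines_of_twoPiecesOn {g : ℝ → ℝ} {k m : ℕ} {t : Fin (m + 1) → ℝ}
    (h0 : t 0 = 0) (h1 : t (Fin.last m) = 1) (L : Fin k → ℝ × ℝ)
    (hg : ∀ j : Fin m, TwoPiecesOn g L (t j.castSucc) (t j.succ)) : CoveredByLines g k := by
  choose τ hτ i₁ i₂ hg₁ hg₂ using hg
  -- the nodes are `t 0, τ 0, t 1, τ 1, …, τ (m - 1), t m`
  let T : Fin (2 * m + 1) → ℝ := fun p =>
    if hp : (p : ℕ) % 2 = 0 then t ⟨p / 2, by omega⟩ else τ ⟨p / 2, by omega⟩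
  let line : Fin (2 * m) → Fin k := fun p =>
    if (p : ℕ) % 2 = 0 then i₁ ⟨p / 2, by omega⟩ else i₂ ⟨p / 2, by omega⟩
  have hT : ∀ p : Fin (2 * m), ∃ j : Fin m,
      (T p.castSucc = t j.castSucc ∧ T p.succ = τ j ∧ line p = i₁ j) ∨
      (T p.castSucc = τ j ∧ T p.succ = t j.succ ∧ line p = i₂ j) := by
    intro p
    refine ⟨⟨p / 2, by omega⟩, ?_⟩
    rcases Nat.mod_two_eq_zero_or_one p with hp | hp
    · left
      have : ((p : ℕ) + 1) / 2 = p / 2 := by omega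
      simp [T, line, hp, this, Nat.add_mod]
    · right
      have : ((p : ℕ) + 1) / 2 = p / 2 + 1 := by omega
      simp [T, line, hp, this, Nat.add_mod]
  refine ⟨2 * m, T, L, line, Fin.monotone_iff_le_succ.2 fun p => ?_, ?_, ?_, fun p x hx => ?_⟩
  · obtain ⟨j, ⟨e₁, e₂, -⟩ | ⟨e₁, e₂, -⟩⟩ := hT p <;> rw [e₁, e₂]
    exacts [(hτ j).1, (hτ j).2]
  · simpa [T] using h0
  · simpa [T, Fin.last] using h1
  · obtain ⟨j, ⟨e₁, e₂, e₃⟩ | ⟨e₁, e₂, e₃⟩⟩ := hT p <;> rw [e₁, e₂] at hx <;> rw [e₃]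
    exacts [hg₁ j x hx, hg₂ j x hx]

noncomputable def tailMin {m : ℕ} (f : ℝ → ℝ) (t : Fin (m + 1) → ℝ) (j : Fin m) : ℝ :=
  (Finset.Ici j).inf' Finset.nonempty_Ici fun i => f (t i.succ)

section tailMin

variable {m : ℕ} {f : ℝ → ℝ} {t : Fin (m + 1) → ℝ} {i j : Fin m}

theorem tailMin_le (hji : j ≤ i) : tailMin f t j ≤ f (t i.succ) :=
  Finset.inf'_le _ (Finset.mem_Ici.2 hji)

theorem tailMin_le_of_succ_le {p : Fin (m + 1)} (hp : j.succ ≤ p) : tailMin f t j ≤ f (t p) := by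
  obtain ⟨i, rfl⟩ := Fin.exists_succ_eq.2 ((Fin.succ_pos j).trans_le hp).ne'
  exact tailMin_le (Fin.succ_le_succ_iff.1 hp)

theorem exists_eq_tailMin (f : ℝ → ℝ) (t : Fin (m + 1) → ℝ) (j : Fin m) :
    ∃ i, j ≤ i ∧ f (t i.succ) = tailMin f t j := by
  obtain ⟨i, hi, he⟩ :=
    Finset.exists_mem_eq_inf' Finset.nonempty_Ici fun i : Fin m => f (t i.succ)
  exact ⟨i, Finset.mem_Ici.1 hi, he.symm⟩

end tailMin

noncomputable def suffixInfLines {k m : ℕ} (f : ℝ → ℝ) (t : Fin (m + 1) → ℝ)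
    (L : Fin k → ℝ × ℝ) (l : Fin m → Fin k) : Fin k → ℝ × ℝ := fun i =>
  if (L i).1 < 0 then (0, sInf ((fun p => f (t p.succ)) '' {p | l p = i})) else L i

namespace IsLineCover

variable {k m : ℕ} {f : ℝ → ℝ} {t : Fin (m + 1) → ℝ} {L : Fin k → ℝ × ℝ} {l : Fin m → Fin k}

theorem isLeast_image_Icc (h : IsLineCover f t L l) {j : Fin m} {x : ℝ}
    (hx : x ∈ Icc (t j.castSucc) (t j.succ)) :
    IsLeast (f '' Icc x 1) (min (f x) (tailMin f t j)) := by
  have hx01 := h.piece_subset_Icc j hx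
  constructor
  · rcases min_choice (f x) (tailMin f t j) with hmin | hmin <;> rw [hmin]
    · exact mem_image_of_mem f ⟨le_rfl, hx01.2⟩
    · obtain ⟨i, hji, hi⟩ := exists_eq_tailMin f t j
      refine ⟨t i.succ, ⟨hx.2.trans (h.monotone (Fin.succ_le_succ_iff.2 hji)), ?_⟩, hi⟩
      exact (h.piece_subset_Icc i ⟨h.castSucc_le_succ i, le_rfl⟩).2
  · rintro _ ⟨u, hu, rfl⟩
    obtain ⟨i, hi⟩ := h.exists_mem_piece ⟨hx01.1.trans hu.1, hu.2⟩
    rcases lt_trichotomy i j with hij | rfl | hji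
    · have hux : u = x :=
        le_antisymm ((hi.2.trans (h.monotone (Fin.succ_le_castSucc_iff.2 hij))).trans hx.1) hu.1
      exact hux ▸ min_le_left _ _
    · exact (min_le_min_left _ (tailMin_le le_rfl)).trans
        (h.min_le_of_mem_piece i hx.1 le_rfl ⟨hu.1, hi.2⟩)
    · refine min_le_of_right_le ((le_min ?_ (tailMin_le hji.le)).trans
        (h.min_le_of_mem_piece i le_rfl le_rfl hi))
      exact tailMin_le_of_succ_le (Fin.succ_le_castSucc_iff.2 hji)

theorem exists_isLeast_image_Icc (h : IsLineCover f t L l) {x : ℝ} (hx : x ∈ Icc 0 1) :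
    ∃ a, IsLeast (f '' Icc x 1) a :=
  let ⟨_, hj⟩ := h.exists_mem_piece hx
  ⟨_, h.isLeast_image_Icc hj⟩

theorem exists_slope_neg_eq_tailMin (h : IsLineCover f t L l) {j : Fin m}
    (hj : (L (l j)).1 < 0 ∨ tailMin f t j < f (t j.succ)) :
    ∃ w, j ≤ w ∧ f (t w.succ) = tailMin f t j ∧ (L (l w)).1 < 0 := by
  obtain ⟨i, hji, hi⟩ := exists_eq_tailMin f t j
  -- take the first node after `t j` at which the minimum is attained
  obtain ⟨p, ⟨hjp, hp⟩, hmin⟩ := wellFounded_lt.has_min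
    {p : Fin (m + 1) | j.succ ≤ p ∧ f (t p) = tailMin f t j}
    ⟨i.succ, Fin.succ_le_succ_iff.2 hji, hi⟩
  obtain ⟨w, rfl⟩ := Fin.exists_succ_eq.2 ((Fin.succ_pos j).trans_le hjp).ne'
  have hjw := Fin.succ_le_succ_iff.1 hjp
  refine ⟨w, hjw, hp, ?_⟩
  rcases hjw.eq_or_lt with rfl | hjw
  · exact hj.resolve_right hp.symm.not_lt
  · have hprev : tailMin f t j < f (t w.castSucc) :=
      (tailMin_le_of_succ_le (Fin.succ_le_castSucc_iff.2 hjw)).lt_of_ne fun he =>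
        hmin _ ⟨Fin.succ_le_castSucc_iff.2 hjw, he.symm⟩ Fin.castSucc_lt_succ
    refine neg_of_affine_lt (q := (L (l w)).2) (h.castSucc_le_succ w) ?_
    rw [← h.eq_on_piece w _ ⟨h.castSucc_le_succ w, le_rfl⟩,
      ← h.eq_on_piece w _ ⟨le_rfl, h.castSucc_le_succ w⟩, hp]
    exact hprev

theorem suffixInfLines_of_nonneg {i : Fin k} (hi : 0 ≤ (L i).1) :
    suffixInfLines f t L l i = L i :=
  if_neg (not_lt.2 hi)

theorem suffixInfLines_eq_tailMin (h : IsLineCover f t L l) {j w : Fin m} (hjw : j ≤ w)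
    (hw : f (t w.succ) = tailMin f t j) (hneg : (L (l w)).1 < 0) :
    suffixInfLines f t L l (l w) = (0, tailMin f t j) := by
  rw [suffixInfLines, if_pos hneg, ← hw]
  congr
  refine IsLeast.csInf_eq ⟨⟨w, rfl, rfl⟩, ?_⟩
  rintro _ ⟨p, hp, rfl⟩
  rcases le_total p w with hpw | hwp
  · have e₁ := h.eq_on_piece p (t p.succ) ⟨h.castSucc_le_succ p, le_rfl⟩
    have e₂ := h.eq_on_piece w (t w.succ) ⟨h.castSucc_le_succ w, le_rfl⟩
    have := h.monotone (Fin.succ_le_succ_iff.2 hpw)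
    rw [show l p = l w from hp] at e₁
    change f (t w.succ) ≤ f (t p.succ)
    rw [e₁, e₂]
    nlinarith
  · exact hw ▸ tailMin_le (hjw.trans hwp)

theorem twoPiecesOn_suffixInf (h : IsLineCover f t L l) (j : Fin m) :
    TwoPiecesOn (fun x => sInf (f '' Icc x 1)) (suffixInfLines f t L l)
      (t j.castSucc) (t j.succ) := by
  set A := tailMin f t j
  set s := (L (l j)).1
  have hab := h.castSucc_le_succ j
  have hfj := h.eq_on_piece j
  have hfa := hfj _ ⟨le_rfl, hab⟩
  have hfb := hfj _ ⟨hab, le_rfl⟩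
  have hAb : A ≤ f (t j.succ) := tailMin_le le_rfl
  have hG : ∀ x ∈ Icc (t j.castSucc) (t j.succ), sInf (f '' Icc x 1) = min (f x) A :=
    fun x hx => (h.isLeast_image_Icc hx).csInf_eq
  by_cases hP : 0 ≤ s ∧ f (t j.succ) ≤ A
  · refine .of_eqOn hab (l j) fun x hx => ?_
    have hfx : f x ≤ A := by nlinarith [hfj x hx, hx.2, hP.1]
    rw [hG x hx, min_eq_left hfx, suffixInfLines_of_nonneg hP.1, hfj x hx]
  obtain ⟨w, hjw, hw, hneg⟩ :=
    h.exists_slope_neg_eq_tailMin (j := j) ((lt_or_ge s 0).imp_right fun hs => by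
      by_contra hA
      exact hP ⟨hs, not_lt.1 hA⟩)
  have hQ := h.suffixInfLines_eq_tailMin hjw hw hneg
  by_cases hA : A ≤ f (t j.castSucc)
  · refine .of_eqOn hab (l w) fun x hx => ?_
    have hAx : A ≤ f x := (le_min hA hAb).trans (h.min_le_of_mem_piece j le_rfl le_rfl hx)
    rw [hG x hx, min_eq_right hAx, hQ, zero_mul, zero_add]
  · rw [not_le] at hA
    have hs : 0 ≤ s := by nlinarith
    obtain ⟨τ, hτ, hfτ⟩ := exists_affine_eq_of_mem_Icc hab (y := A) ⟨hfa ▸ hA.le, hfb ▸ hAb⟩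
    refine ⟨τ, hτ, l j, l w, fun x hx => ?_, fun x hx => ?_⟩
    · dsimp only
      have hx' : x ∈ Icc (t j.castSucc) (t j.succ) := ⟨hx.1, hx.2.trans hτ.2⟩
      have hfx : f x ≤ A := by nlinarith [hfj x hx', hx.2]
      rw [hG x hx', min_eq_left hfx, suffixInfLines_of_nonneg hs, hfj x hx']
    · dsimp only
      have hx' : x ∈ Icc (t j.castSucc) (t j.succ) := ⟨hτ.1.trans hx.1, hx.2⟩
      have hAx : A ≤ f x := by nlinarith [hfj x hx', hx.1]
      rw [hG x hx', min_eq_right hAx, hQ, zero_mul, zero_add]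

end IsLineCover

theorem CoveredByLines.suffixInf {f : ℝ → ℝ} {k : ℕ} (hf : CoveredByLines f k) :
    CoveredByLines (fun x => sInf (f '' Icc x 1)) k := by
  obtain ⟨m, t, L, l, h⟩ := coveredByLines_iff.1 hf
  exact coveredByLines_of_twoPiecesOn h.apply_zero h.apply_last _ h.twoPiecesOn_suffixInf

theorem CoveredByLines.exists_isLeast_image_Icc {f : ℝ → ℝ} {k : ℕ} (hf : CoveredByLines f k)
    {x : ℝ} (hx : x ∈ Icc 0 1) : ∃ a, IsLeast (f '' Icc x 1) a := by
  obtain ⟨m, t, L, l, h⟩ := coveredByLines_iff.1 hf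
  exact h.exists_isLeast_image_Icc hx

theorem stmt10_general (k : ℕ) (f : ℝ → ℝ) (hf : CoveredByLines f k)
    (r c : ℝ) :
    CoveredByLines
      (fun t => sInf ((fun t' => r * (t' - t) + f t' + c) '' Set.Icc t 1)) (k + 1) := by
  have hF : CoveredByLines (fun u => f u + r * u + 0) k := hf.add_affine r 0
  refine ((hF.suffixInf.add_affine (-r) c).congr fun x hx => ?_).mono k.le_succ
  obtain ⟨a, ha⟩ := hF.exists_isLeast_image_Icc hx
  have hshift : (fun t' => r * (t' - x) + f t' + c) '' Icc x 1 =
      (· + (c - r * x)) '' ((fun u => f u + r * u + 0) '' Icc x 1) := by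
    rw [image_image]
    exact image_congr fun u _ => by ring
  have hmono : Monotone (· + (c - r * x)) := fun _ _ h => add_le_add_left h _
  rw [hshift, (hmono.map_isLeast ha).csInf_eq, ha.csInf_eq]
  ring

theorem stmt10 (k : ℕ) (f : ℝ → ℝ) (hf : CoveredByLines f k)
    (r c : ℝ) (hr : 0 ≤ r) (hc : 0 ≤ c) :
    CoveredByLines
      (fun t => sInf ((fun t' => r * (t' - t) + f t' + c) '' Set.Icc t 1)) (k + 1) :=
  stmt10_general k f hf r c
end

section
/- For each k ≥ 1, any strategy (for either player) in the level-k exponential lower bound game that is ε-optimal for some ε < 2^{-k} when starting at level-k states must have a change point inside every half-open interval [x·2^{-(k-1)}, (x+1)·2^{-(k-1)}) with x integer and the interval contained in [0,1); consequently every such ε-optimal strategy has at least 2^{k-1} change points. -/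
lemma fract_double (u : ℝ) :
    abs (1 - 4 * |Int.fract u - 1/2|) = 2 * |Int.fract (2*u) - 1/2| := by
  have h0 : (0:ℝ) ≤ Int.fract u := Int.fract_nonneg u
  have h1 : Int.fract u < 1 := Int.fract_lt_one u
  have h2 : Int.fract (2*u) = Int.fract (2 * Int.fract u) := by
    conv_lhs => rw [show (2:ℝ)*u = 2 * Int.fract u + ((2 * ⌊u⌋ : ℤ) : ℝ) by
      push_cast; rw [Int.fract]; ring]
    rw [Int.fract_add_intCast]
  rcases lt_or_ge (Int.fract u) (1/2) with hc | hc
  · have h3 : Int.fract (2 * Int.fract u) = 2 * Int.fract u :=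
      Int.fract_eq_self.2 ⟨by linarith, by linarith⟩
    rw [h2, h3, abs_of_nonpos (by linarith : Int.fract u - 1/2 ≤ 0)]
    rw [show (2:ℝ) * |2 * Int.fract u - 1/2| = |2 * (2 * Int.fract u - 1/2)| by
      rw [abs_mul]; norm_num]
    congr 1; ring
  · have h3 : Int.fract (2 * Int.fract u) = 2 * Int.fract u - 1 := by
      have e1 : Int.fract (2 * Int.fract u - 1 + ((1:ℤ):ℝ)) = Int.fract (2 * Int.fract u - 1) :=
        Int.fract_add_intCast _ _
      have e2 : Int.fract (2 * Int.fract u - 1) = 2 * Int.fract u - 1 :=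
        Int.fract_eq_self.2 ⟨by linarith, by linarith⟩
      rw [show (2:ℝ) * Int.fract u = 2 * Int.fract u - 1 + ((1:ℤ):ℝ) by push_cast; ring, e1, e2]; push_cast; ring
    rw [h2, h3, abs_of_nonneg (by linarith : (0:ℝ) ≤ Int.fract u - 1/2)]
    rw [show (2:ℝ) * |2 * Int.fract u - 1 - 1/2| = |2 * (2 * Int.fract u - 1 - 1/2)| by
      rw [abs_mul]; norm_num]
    rw [abs_sub_comm]
    congr 1; ring

lemma dform : ∀ (j : ℕ) (t : ℝ), 0 ≤ t → t ≤ 1 →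
    (fg j).2 t - (fg j).1 t = 2 * ((2:ℝ)⁻¹)^j * |Int.fract ((2:ℝ)^j * t / 2) - 1/2|
  | 0, t, h0, h1 => by
    have hf : Int.fract ((2:ℝ)^0 * t / 2) = t/2 := by
      rw [pow_zero, one_mul]
      exact Int.fract_eq_self.2 ⟨by linarith, by linarith⟩
    rw [hf, abs_of_nonpos (by linarith : t/2 - 1/2 ≤ 0)]
    show (1 - t) - 0 = _
    ring
  | (j+1), t, h0, h1 => by
    have ih := dform j t h0 h1
    have hd : (fg (j+1)).2 t - (fg (j+1)).1 t
        = |((fg j).1 t + ((2:ℝ)⁻¹)^(j+1)) - (fg j).2 t| := by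
      rw [abs_sub_comm]
      exact max_sub_min_eq_abs _ _
    have e1 : ((fg j).1 t + ((2:ℝ)⁻¹)^(j+1)) - (fg j).2 t
        = ((2:ℝ)⁻¹)^(j+1) * (1 - 4 * |Int.fract ((2:ℝ)^j * t / 2) - 1/2|) := by
      have : (fg j).2 t = (fg j).1 t + 2 * ((2:ℝ)⁻¹)^j * |Int.fract ((2:ℝ)^j * t / 2) - 1/2| := by
        linarith
      rw [this, pow_succ]
      ring
    rw [hd, e1, abs_mul, abs_of_nonneg (by positivity : (0:ℝ) ≤ ((2:ℝ)⁻¹)^(j+1)),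
      fract_double, show (2:ℝ) * ((2:ℝ)^j * t / 2) = (2:ℝ)^(j+1) * t / 2 by ring]
    ring

theorem stmt14 (k : ℕ) (hk : 1 ≤ k) (ε : ℝ) (hε : 0 ≤ ε) (hεlt : ε < ((2:ℝ)⁻¹)^k)
    (W : Finset ℝ) (s : ℝ → Bool)
    (hs : ∀ t t' : ℝ, t ≤ t' → (∀ w ∈ W, ¬ (t < w ∧ w ≤ t')) → s t = s t')
    (hopt : ∀ t ∈ Set.Icc (0:ℝ) 1,
      (if s t then (fg (k-1)).1 t + ((2:ℝ)⁻¹)^k else (fg (k-1)).2 t)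
        ≤ (fg k).1 t + ε) :
    (∀ x : ℕ, ((x:ℝ) + 1) * ((2:ℝ)⁻¹)^(k-1) ≤ 1 →
      ∃ w ∈ W, (x:ℝ) * ((2:ℝ)⁻¹)^(k-1) ≤ w ∧ w < ((x:ℝ) + 1) * ((2:ℝ)⁻¹)^(k-1)) ∧
    2^(k-1) ≤ W.card := by
  classical
  obtain ⟨j, rfl⟩ : ∃ j, k = j + 1 := ⟨k - 1, (Nat.succ_pred_eq_of_pos hk).symm⟩
  simp only [Nat.add_sub_cancel] at hopt ⊢
  set h : ℝ := ((2:ℝ)⁻¹)^j with hh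
  have hpos : 0 < h := by positivity
  have hkh : ((2:ℝ)⁻¹)^(j+1) = h/2 := by rw [pow_succ, hh]; ring
  have hinv : (2:ℝ)^j * h = 1 := by
    rw [hh, ← mul_pow]; norm_num
  rw [hkh] at hεlt hopt
  set δ : ℝ := (h/2 - ε)/2 with hδ
  have hδpos : 0 < δ := by rw [hδ]; linarith
  have hδlth : δ < h := by rw [hδ]; linarith
  have key : ∀ x : ℕ, ((x:ℝ) + 1) * h ≤ 1 →
      ∃ w ∈ W, (x:ℝ) * h ≤ w ∧ w < ((x:ℝ) + 1) * h := by
    intro x hx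
    have hx0 : (0:ℝ) ≤ (x:ℝ) := Nat.cast_nonneg x
    set t₁ : ℝ := (x:ℝ) * h with ht₁
    set t₂ : ℝ := ((x:ℝ) + 1) * h - δ with ht₂
    have ht₁0 : 0 ≤ t₁ := by positivity
    have ht₁₂ : t₁ < t₂ := by rw [ht₁, ht₂]; nlinarith
    have ht₂lt : t₂ < ((x:ℝ) + 1) * h := by rw [ht₂]; linarith
    have ht₂1 : t₂ ≤ 1 := by linarith
    have ht₁1 : t₁ ≤ 1 := by linarith
    have ht₂0 : 0 ≤ t₂ := by linarith
    have hu₁ : (2:ℝ)^j * t₁ / 2 = (x:ℝ) / 2 := by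
      rw [ht₁, show (2:ℝ)^j * ((x:ℝ) * h) = (x:ℝ) * ((2:ℝ)^j * h) by ring, hinv]; ring
    set β : ℝ := (2:ℝ)^j * δ / 2 with hβ
    have hβpos : 0 < β := by positivity
    have hβlt : β < 1/2 := by
      have : (2:ℝ)^j * δ < (2:ℝ)^j * h := by
        have : (0:ℝ) < (2:ℝ)^j := by positivity
        nlinarith
      rw [hβ]; rw [hinv] at this; linarith
    have hu₂ : (2:ℝ)^j * t₂ / 2 = ((x:ℝ) + 1) / 2 - β := by
      rw [ht₂, hβ, show (2:ℝ)^j * (((x:ℝ) + 1) * h - δ)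
        = ((x:ℝ) + 1) * ((2:ℝ)^j * h) - (2:ℝ)^j * δ by ring, hinv]; ring
    have d₁ := dform j t₁ ht₁0 ht₁1
    have d₂ := dform j t₂ ht₂0 ht₂1
    rw [hu₁] at d₁
    rw [hu₂] at d₂
    rw [← hh] at d₁ d₂
    -- forcing lemmas
    have force_true : ∀ t : ℝ, 0 ≤ t → t ≤ 1 →
        (fg j).2 t - (fg j).1 t > h/2 + ε → s t = true := by
      intro t h0 h1 hgap
      by_contra hb
      rw [Bool.not_eq_true] at hb
      have := hopt t ⟨h0, h1⟩
      rw [hb, if_neg (by simp)] at this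
      have hle : (fg (j+1)).1 t ≤ (fg j).1 t + ((2:ℝ)⁻¹)^(j+1) := min_le_left _ _
      rw [hkh] at hle
      linarith
    have force_false : ∀ t : ℝ, 0 ≤ t → t ≤ 1 →
        (fg j).2 t - (fg j).1 t < h/2 - ε → s t = false := by
      intro t h0 h1 hgap
      by_contra hb
      rw [Bool.not_eq_false] at hb
      have := hopt t ⟨h0, h1⟩
      rw [hb, if_pos rfl] at this
      have hle : (fg (j+1)).1 t ≤ (fg j).2 t := min_le_right _ _
      linarith
    have hεh : ε < h/2 := hεlt
    have main : s t₁ ≠ s t₂ := by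
      rcases Nat.even_or_odd x with ⟨m, hm⟩ | ⟨m, hm⟩
      · -- x even : d(t₁) = h, d(t₂) = δ
        have hf₁ : Int.fract ((x:ℝ)/2) = 0 := by
          rw [hm, show (((m + m : ℕ)):ℝ)/2 = ((m:ℤ):ℝ) by push_cast; ring]
          exact Int.fract_intCast m
        have hf₂ : Int.fract (((x:ℝ) + 1)/2 - β) = 1/2 - β := by
          rw [hm, show ((((m + m : ℕ)):ℝ) + 1)/2 - β = (1/2 - β) + ((m:ℤ):ℝ) by push_cast; ring,
            Int.fract_add_intCast]
          exact Int.fract_eq_self.2 ⟨by linarith, by linarith⟩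
        rw [hf₁] at d₁
        rw [hf₂] at d₂
        have hd₁ : (fg j).2 t₁ - (fg j).1 t₁ = h := by
          rw [d₁, abs_of_nonpos (by norm_num : (0:ℝ) - 1/2 ≤ 0)]; ring
        have hd₂ : (fg j).2 t₂ - (fg j).1 t₂ = δ := by
          rw [d₂, abs_of_nonpos (by linarith : 1/2 - β - 1/2 ≤ 0)]
          linear_combination 2*h*hβ + δ*hinv
        have h1 : s t₁ = true := force_true t₁ ht₁0 ht₁1 (by rw [hd₁]; linarith)
        have h2 : s t₂ = false := force_false t₂ ht₂0 ht₂1 (by rw [hd₂, hδ]; linarith)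
        rw [h1, h2]; simp
      · -- x odd : d(t₁) = 0, d(t₂) = h - δ
        have hf₁ : Int.fract ((x:ℝ)/2) = 1/2 := by
          rw [hm, show (((2*m + 1 : ℕ)):ℝ)/2 = 1/2 + ((m:ℤ):ℝ) by push_cast; ring,
            Int.fract_add_intCast]
          exact Int.fract_eq_self.2 ⟨by norm_num, by norm_num⟩
        have hf₂ : Int.fract (((x:ℝ) + 1)/2 - β) = 1 - β := by
          rw [hm, show ((((2*m + 1 : ℕ)):ℝ) + 1)/2 - β = (1 - β) + ((m:ℤ):ℝ) by push_cast; ring,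
            Int.fract_add_intCast]
          exact Int.fract_eq_self.2 ⟨by linarith, by linarith⟩
        rw [hf₁] at d₁
        rw [hf₂] at d₂
        have hd₁ : (fg j).2 t₁ - (fg j).1 t₁ = 0 := by
          rw [d₁]; norm_num
        have hd₂ : (fg j).2 t₂ - (fg j).1 t₂ = h - δ := by
          rw [d₂, abs_of_nonneg (by linarith : (0:ℝ) ≤ 1 - β - 1/2)]
          linear_combination (-2*h)*hβ - δ*hinv
        have h1 : s t₁ = false := force_false t₁ ht₁0 ht₁1 (by rw [hd₁]; linarith)
        have h2 : s t₂ = true := force_true t₂ ht₂0 ht₂1 (by rw [hd₂, hδ]; linarith)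
        rw [h1, h2]; simp
    have hex : ¬ ∀ w ∈ W, ¬ (t₁ < w ∧ w ≤ t₂) := fun H => main (hs t₁ t₂ (le_of_lt ht₁₂) H)
    push_neg at hex
    obtain ⟨w, hwW, hw1, hw2⟩ := hex
    exact ⟨w, hwW, le_of_lt hw1, lt_of_le_of_lt hw2 ht₂lt⟩
  refine ⟨key, ?_⟩
  set F : ℕ → ℝ := fun x => if hx : ((x:ℝ) + 1) * h ≤ 1 then (key x hx).choose else 0 with hF
  have hFspec : ∀ x : ℕ, ((x:ℝ) + 1) * h ≤ 1 →
      F x ∈ W ∧ (x:ℝ) * h ≤ F x ∧ F x < ((x:ℝ) + 1) * h := by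
    intro x hx
    simp only [hF, dif_pos hx]
    exact (key x hx).choose_spec
  have hcond : ∀ x ∈ Finset.range (2^j), ((x:ℝ) + 1) * h ≤ 1 := by
    intro x hx
    have h1 : x + 1 ≤ 2^j := Finset.mem_range.1 hx
    have h2 : ((x:ℝ) + 1) ≤ (2:ℝ)^j := by exact_mod_cast h1
    calc ((x:ℝ) + 1) * h ≤ (2:ℝ)^j * h := by nlinarith
      _ = 1 := hinv
  have hmaps : ∀ x ∈ Finset.range (2^j), F x ∈ W := fun x hx => (hFspec x (hcond x hx)).1
  have hinj : ∀ x ∈ Finset.range (2^j), ∀ y ∈ Finset.range (2^j), F x = F y → x = y := by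
    intro x hx y hy hxy
    obtain ⟨_, hx1, hx2⟩ := hFspec x (hcond x hx)
    obtain ⟨_, hy1, hy2⟩ := hFspec y (hcond y hy)
    rw [hxy] at hx1 hx2
    have e1 : (x:ℝ) < (y:ℝ) + 1 := by nlinarith
    have e2 : (y:ℝ) < (x:ℝ) + 1 := by nlinarith
    have e1' : x < y + 1 := by exact_mod_cast e1
    have e2' : y < x + 1 := by exact_mod_cast e2
    omega
  have := Finset.card_le_card_of_injOn F hmaps hinj
  rwa [Finset.card_range] at this
end
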